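/- For binary X, Y and two binary mediators W1, W2 as above, the total marginal log cross-product ratio of Y and X satisfies log cpr(Y,X) = βx + βxw1 + βxw2 + (log RR_{W2|Y,X=0} − log RR_{W2|Y,X=1}) + (log RR_{W1|Y,W2=1,X=0} − log RR_{W1|Y,W2=1,X=1}). -/

import Mathlib

noncomputable def expit (t : ℝ) : ℝ := Real.exp t / (1 + Real.exp t)

/-- `P(Y=1 | X=x, W1=w1, W2=w2)` under the hierarchical logistic model. -/
noncomputable def pY2 (β0 βx βw1 βxw1 βw2 βxw2 βw1w2 x w1 w2 : ℝ) : ℝ :=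
  expit (β0 + βx * x + βw1 * w1 + βxw1 * x * w1 + βw2 * w2 + βxw2 * x * w2 + βw1w2 * w1 * w2)

/-- `P(W1=1 | X=x, W2=w2)` under the hierarchical logistic model. -/
noncomputable def pW1 (γ10 γ1x γ1w2 γ1xw2 x w2 : ℝ) : ℝ :=
  expit (γ10 + γ1x * x + γ1w2 * w2 + γ1xw2 * x * w2)

/-- `P(W2=1 | X=x)` under the hierarchical logistic model. -/
noncomputable def pW2 (γ20 γ2x x : ℝ) : ℝ := expit (γ20 + γ2x * x)

/-- joint conditional probability `P(Y=y, W1=w1 | X=x, W2=w2)`. -/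
noncomputable def jYW1 (β0 βx βw1 βxw1 βw2 βxw2 βw1w2 γ10 γ1x γ1w2 γ1xw2 x w2 : ℝ)
    (y w1 : Bool) : ℝ :=
  (if y then pY2 β0 βx βw1 βxw1 βw2 βxw2 βw1w2 x (if w1 then 1 else 0) w2
   else 1 - pY2 β0 βx βw1 βxw1 βw2 βxw2 βw1w2 x (if w1 then 1 else 0) w2) *
  (if w1 then pW1 γ10 γ1x γ1w2 γ1xw2 x w2 else 1 - pW1 γ10 γ1x γ1w2 γ1xw2 x w2)

/-- marginal (over `W1`) log odds of `Y` given `X=x, W2=w2`. -/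
noncomputable def Lgt (β0 βx βw1 βxw1 βw2 βxw2 βw1w2 γ10 γ1x γ1w2 γ1xw2 x w2 : ℝ) : ℝ :=
  Real.log ((jYW1 β0 βx βw1 βxw1 βw2 βxw2 βw1w2 γ10 γ1x γ1w2 γ1xw2 x w2 true true +
      jYW1 β0 βx βw1 βxw1 βw2 βxw2 βw1w2 γ10 γ1x γ1w2 γ1xw2 x w2 true false) /
    (jYW1 β0 βx βw1 βxw1 βw2 βxw2 βw1w2 γ10 γ1x γ1w2 γ1xw2 x w2 false true +
      jYW1 β0 βx βw1 βxw1 βw2 βxw2 βw1w2 γ10 γ1x γ1w2 γ1xw2 x w2 false false))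

/-- `log RR_{W1∣Y, X=x, W2=w2} = log [P(W1=1|Y=1,X=x,W2=w2) / P(W1=1|Y=0,X=x,W2=w2)]`. -/
noncomputable def logRRW1 (β0 βx βw1 βxw1 βw2 βxw2 βw1w2 γ10 γ1x γ1w2 γ1xw2 x w2 : ℝ) : ℝ :=
  Real.log ((jYW1 β0 βx βw1 βxw1 βw2 βxw2 βw1w2 γ10 γ1x γ1w2 γ1xw2 x w2 true true /
      (jYW1 β0 βx βw1 βxw1 βw2 βxw2 βw1w2 γ10 γ1x γ1w2 γ1xw2 x w2 true true +
        jYW1 β0 βx βw1 βxw1 βw2 βxw2 βw1w2 γ10 γ1x γ1w2 γ1xw2 x w2 true false)) /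
    (jYW1 β0 βx βw1 βxw1 βw2 βxw2 βw1w2 γ10 γ1x γ1w2 γ1xw2 x w2 false true /
      (jYW1 β0 βx βw1 βxw1 βw2 βxw2 βw1w2 γ10 γ1x γ1w2 γ1xw2 x w2 false true +
        jYW1 β0 βx βw1 βxw1 βw2 βxw2 βw1w2 γ10 γ1x γ1w2 γ1xw2 x w2 false false)))

/-- joint conditional probability `P(Y=y, W1=w1, W2=w2 | X=x)`. -/
noncomputable def jFull (β0 βx βw1 βxw1 βw2 βxw2 βw1w2 γ10 γ1x γ1w2 γ1xw2 γ20 γ2x x : ℝ)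
    (y w1 w2 : Bool) : ℝ :=
  jYW1 β0 βx βw1 βxw1 βw2 βxw2 βw1w2 γ10 γ1x γ1w2 γ1xw2 x (if w2 then 1 else 0) y w1 *
    (if w2 then pW2 γ20 γ2x x else 1 - pW2 γ20 γ2x x)

/-- marginal probability `P(Y=y | X=x)`, marginalizing over both mediators. -/
noncomputable def pYmarg (β0 βx βw1 βxw1 βw2 βxw2 βw1w2 γ10 γ1x γ1w2 γ1xw2 γ20 γ2x x : ℝ)
    (y : Bool) : ℝ :=
  ∑ w1 : Bool, ∑ w2 : Bool,
    jFull β0 βx βw1 βxw1 βw2 βxw2 βw1w2 γ10 γ1x γ1w2 γ1xw2 γ20 γ2x x y w1 w2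

/-- `log RR_{W2∣Y, X=x} = log [P(W2=1|Y=1,X=x)/P(W2=1|Y=0,X=x)]`. -/
noncomputable def logRRW2 (β0 βx βw1 βxw1 βw2 βxw2 βw1w2 γ10 γ1x γ1w2 γ1xw2 γ20 γ2x x : ℝ) : ℝ :=
  Real.log
    (((∑ w1 : Bool, jFull β0 βx βw1 βxw1 βw2 βxw2 βw1w2 γ10 γ1x γ1w2 γ1xw2 γ20 γ2x x true w1 true) /
        pYmarg β0 βx βw1 βxw1 βw2 βxw2 βw1w2 γ10 γ1x γ1w2 γ1xw2 γ20 γ2x x true) /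
     ((∑ w1 : Bool, jFull β0 βx βw1 βxw1 βw2 βxw2 βw1w2 γ10 γ1x γ1w2 γ1xw2 γ20 γ2x x false w1 true) /
        pYmarg β0 βx βw1 βxw1 βw2 βxw2 βw1w2 γ10 γ1x γ1w2 γ1xw2 γ20 γ2x x false))

/-- `log RR_{W1∣Y, W2=1, X=x} = log [P(W1=1|Y=1,W2=1,X=x)/P(W1=1|Y=0,W2=1,X=x)]`. -/
noncomputable def logRRW1cond (β0 βx βw1 βxw1 βw2 βxw2 βw1w2 γ10 γ1x γ1w2 γ1xw2 γ20 γ2x x : ℝ) : ℝ :=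
  Real.log
    ((jFull β0 βx βw1 βxw1 βw2 βxw2 βw1w2 γ10 γ1x γ1w2 γ1xw2 γ20 γ2x x true true true /
        (jFull β0 βx βw1 βxw1 βw2 βxw2 βw1w2 γ10 γ1x γ1w2 γ1xw2 γ20 γ2x x true true true +
         jFull β0 βx βw1 βxw1 βw2 βxw2 βw1w2 γ10 γ1x γ1w2 γ1xw2 γ20 γ2x x true false true)) /
     (jFull β0 βx βw1 βxw1 βw2 βxw2 βw1w2 γ10 γ1x γ1w2 γ1xw2 γ20 γ2x x false true true /
        (jFull β0 βx βw1 βxw1 βw2 βxw2 βw1w2 γ10 γ1x γ1w2 γ1xw2 γ20 γ2x x false true true +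
         jFull β0 βx βw1 βxw1 βw2 βxw2 βw1w2 γ10 γ1x γ1w2 γ1xw2 γ20 γ2x x false false true)))

/-!
Write `p_x(y) = P(Y=y | X=x)`, `s_x(y) = P(Y=y, W2=1 | X=x)` and `j_x(y) = P(Y=y, W1=1, W2=1 | X=x)`.
Since `s_x(y)/p_x(y)` and `j_x(y)/s_x(y)` are the conditional probabilities whose ratios over `y` are
the two relative risks, the marginal odds `p_x(1)/p_x(0)` equal the joint odds `j_x(1)/j_x(0)` divided
by `RR_{W2|Y,X=x} · RR_{W1|Y,W2=1,X=x}`. In the joint odds the mediator factors cancel, leaving the odds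
of the outcome model at `w1 = w2 = 1`, whose logarithm is the linear predictor. Subtracting the identity
at `x = 0` from the one at `x = 1` gives the decomposition.
-/

open Real

lemma expit_eq_sigmoid (t : ℝ) : expit t = sigmoid t := by
  rw [expit, sigmoid_def, exp_neg]
  field_simp
  ring

lemma expit_pos (t : ℝ) : 0 < expit t :=
  expit_eq_sigmoid t ▸ sigmoid_pos t

lemma one_sub_expit_pos (t : ℝ) : 0 < 1 - expit t :=
  sub_pos.mpr (expit_eq_sigmoid t ▸ sigmoid_lt_one t)

lemma expit_div_one_sub_expit (t : ℝ) : expit t / (1 - expit t) = exp t := by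
  rw [expit_eq_sigmoid, ← sigmoid_neg, ← sigmoid_mul_rexp_neg, div_mul_cancel_left₀
    (sigmoid_pos t).ne', exp_neg, inv_inv]

lemma log_div_eq_sub_log_ratios {p₁ p₀ s₁ s₀ j₁ j₀ : ℝ} (hp₁ : 0 < p₁) (hp₀ : 0 < p₀)
    (hs₁ : 0 < s₁) (hs₀ : 0 < s₀) (hj₁ : 0 < j₁) (hj₀ : 0 < j₀) :
    log (p₁ / p₀) =
      log (j₁ / j₀) - log (s₁ / p₁ / (s₀ / p₀)) - log (j₁ / s₁ / (j₀ / s₀)) := by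
  rw [← log_div (by positivity) (by positivity), ← log_div (by positivity) (by positivity)]
  congr 1
  field_simp

section TwoMediators

variable (β0 βx βw1 βxw1 βw2 βxw2 βw1w2 γ10 γ1x γ1w2 γ1xw2 γ20 γ2x : ℝ)

lemma jFull_pos (x : ℝ) (y w1 w2 : Bool) :
    0 < jFull β0 βx βw1 βxw1 βw2 βxw2 βw1w2 γ10 γ1x γ1w2 γ1xw2 γ20 γ2x x y w1 w2 := by
  have h (b : Bool) (t : ℝ) : 0 < if b then expit t else 1 - expit t := by
    cases b
    · exact one_sub_expit_pos t
    · exact expit_pos t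
  exact mul_pos (mul_pos (h y _) (h w1 _)) (h w2 _)

lemma log_jFull_odds (x : ℝ) :
    log (jFull β0 βx βw1 βxw1 βw2 βxw2 βw1w2 γ10 γ1x γ1w2 γ1xw2 γ20 γ2x x true true true /
        jFull β0 βx βw1 βxw1 βw2 βxw2 βw1w2 γ10 γ1x γ1w2 γ1xw2 γ20 γ2x x false true true) =
      β0 + βx * x + βw1 + βxw1 * x + βw2 + βxw2 * x + βw1w2 := by
  have hW1 := expit_pos (γ10 + γ1x * x + γ1w2 * 1 + γ1xw2 * x * 1)
  have hW2 := expit_pos (γ20 + γ2x * x)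
  simp only [jFull, jYW1, pY2, pW1, pW2, if_true, Bool.false_eq_true, if_false]
  rw [mul_div_mul_right _ _ hW2.ne', mul_div_mul_right _ _ hW1.ne', expit_div_one_sub_expit,
    log_exp]
  ring

lemma pYmarg_pos (x : ℝ) (y : Bool) :
    0 < pYmarg β0 βx βw1 βxw1 βw2 βxw2 βw1w2 γ10 γ1x γ1w2 γ1xw2 γ20 γ2x x y :=
  Finset.sum_pos (fun _ _ ↦ Finset.sum_pos (fun _ _ ↦ jFull_pos ..) Finset.univ_nonempty)
    Finset.univ_nonempty

lemma log_pYmarg_odds (x : ℝ) :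
    log (pYmarg β0 βx βw1 βxw1 βw2 βxw2 βw1w2 γ10 γ1x γ1w2 γ1xw2 γ20 γ2x x true /
        pYmarg β0 βx βw1 βxw1 βw2 βxw2 βw1w2 γ10 γ1x γ1w2 γ1xw2 γ20 γ2x x false) =
      β0 + βx * x + βw1 + βxw1 * x + βw2 + βxw2 * x + βw1w2
        - logRRW2 β0 βx βw1 βxw1 βw2 βxw2 βw1w2 γ10 γ1x γ1w2 γ1xw2 γ20 γ2x x
        - logRRW1cond β0 βx βw1 βxw1 βw2 βxw2 βw1w2 γ10 γ1x γ1w2 γ1xw2 γ20 γ2x x := by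
  have hj := jFull_pos β0 βx βw1 βxw1 βw2 βxw2 βw1w2 γ10 γ1x γ1w2 γ1xw2 γ20 γ2x x
  rw [← log_jFull_odds]
  simp only [logRRW2, logRRW1cond, Fintype.sum_bool]
  exact log_div_eq_sub_log_ratios (pYmarg_pos ..) (pYmarg_pos ..)
    (add_pos (hj ..) (hj ..)) (add_pos (hj ..) (hj ..)) (hj ..) (hj ..)

end TwoMediators

/-- Total marginal log cross-product ratio of `Y` and `X` with two binary mediators. -/
theorem total_log_cpr_two_mediators
    (β0 βx βw1 βxw1 βw2 βxw2 βw1w2 γ10 γ1x γ1w2 γ1xw2 γ20 γ2x : ℝ) :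
    Real.log
      ((pYmarg β0 βx βw1 βxw1 βw2 βxw2 βw1w2 γ10 γ1x γ1w2 γ1xw2 γ20 γ2x 1 true *
        pYmarg β0 βx βw1 βxw1 βw2 βxw2 βw1w2 γ10 γ1x γ1w2 γ1xw2 γ20 γ2x 0 false) /
       (pYmarg β0 βx βw1 βxw1 βw2 βxw2 βw1w2 γ10 γ1x γ1w2 γ1xw2 γ20 γ2x 1 false *
        pYmarg β0 βx βw1 βxw1 βw2 βxw2 βw1w2 γ10 γ1x γ1w2 γ1xw2 γ20 γ2x 0 true))
      = βx + βxw1 + βxw2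
        + (logRRW2 β0 βx βw1 βxw1 βw2 βxw2 βw1w2 γ10 γ1x γ1w2 γ1xw2 γ20 γ2x 0
            - logRRW2 β0 βx βw1 βxw1 βw2 βxw2 βw1w2 γ10 γ1x γ1w2 γ1xw2 γ20 γ2x 1)
        + (logRRW1cond β0 βx βw1 βxw1 βw2 βxw2 βw1w2 γ10 γ1x γ1w2 γ1xw2 γ20 γ2x 0
            - logRRW1cond β0 βx βw1 βxw1 βw2 βxw2 βw1w2 γ10 γ1x γ1w2 γ1xw2 γ20 γ2x 1) := by
  set p := pYmarg β0 βx βw1 βxw1 βw2 βxw2 βw1w2 γ10 γ1x γ1w2 γ1xw2 γ20 γ2x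
  have hp := pYmarg_pos β0 βx βw1 βxw1 βw2 βxw2 βw1w2 γ10 γ1x γ1w2 γ1xw2 γ20 γ2x
  have hcpr : p 1 true * p 0 false / (p 1 false * p 0 true) =
      (p 1 true / p 1 false) / (p 0 true / p 0 false) := by
    field_simp
  rw [hcpr, log_div (div_pos (hp 1 true) (hp 1 false)).ne' (div_pos (hp 0 true) (hp 0 false)).ne',
    log_pYmarg_odds, log_pYmarg_odds]
  ring
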